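/- Let G be a connected graph with diameter D ≥ 3, order n, and metric dimension β(G) = n − D. Then there exists a vertex u_0 of G with eccentricity D that has no twin. -/

import Mathlib

/-- Two distinct vertices are twins if they have the same open neighbourhood
or the same closed neighbourhood. -/
def Twins {V : Type*} (G : SimpleGraph V) (u v : V) : Prop :=
  u ≠ v ∧ ((∀ x, G.Adj u x ↔ G.Adj v x) ∨ (∀ x, (G.Adj u x ∨ u = x) ↔ (G.Adj v x ∨ v = x)))

/-- `S` resolves `G` if every pair of distinct vertices has different
distances to some vertex of `S`. -/
def Resolves {V : Type*} (G : SimpleGraph V) (S : Set V) : Prop :=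
  ∀ v w : V, v ≠ w → ∃ x ∈ S, G.dist v x ≠ G.dist w x

/-- The metric dimension: the minimum cardinality of a resolving set. -/
noncomputable def metricDim {V : Type*} (G : SimpleGraph V) : ℕ :=
  sInf {n | ∃ S : Set V, Resolves G S ∧ S.ncard = n}

/-- The diameter: the maximum distance between two vertices. -/
noncomputable def gdiam {V : Type*} (G : SimpleGraph V) : ℕ :=
  sSup {d | ∃ u v : V, G.dist u v = d}

/-- The eccentricity of a vertex: the maximum distance from it to any vertex. -/
noncomputable def ecc {V : Type*} (G : SimpleGraph V) (v : V) : ℕ :=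
  sSup {d | ∃ w : V, G.dist v w = d}

/-!
Take a diametral pair `a, b` at distance `D ≥ 3` and a shortest path `a = g₀, g₁, …, g_D = b`.
A twin `v` of `a` sees every vertex other than `a, v` exactly as `a` does, so `d(v, b) = D` and
`v` is off the path; likewise a twin `w` of `b`, and then `d(v, w) = D`. If both twins existed,
the `D + 1` vertices `v, g₁, …, g_D` would be resolved by the rest of the graph: `a` separates
the `gᵢ` by their index, and `w` separates `v` from each `gᵢ` since `d(gᵢ, w) < D`. That gives
`β(G) ≤ n - D - 1`.
-/

section Diameter

variable {V : Type*} [Finite V] (G : SimpleGraph V)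

lemma bddAbove_setOf_dist : BddAbove {d | ∃ u v : V, G.dist u v = d} :=
  ((Set.finite_range fun p : V × V => G.dist p.1 p.2).subset
    (by rintro _ ⟨x, y, rfl⟩; exact ⟨(x, y), rfl⟩)).bddAbove

lemma dist_le_gdiam (u v : V) : G.dist u v ≤ gdiam G :=
  le_csSup (bddAbove_setOf_dist G) ⟨u, v, rfl⟩

lemma exists_dist_eq_gdiam [Nonempty V] : ∃ u v : V, G.dist u v = gdiam G :=
  Nat.sSup_mem (s := {d | ∃ u v : V, G.dist u v = d})
    ⟨_, Classical.arbitrary V, Classical.arbitrary V, rfl⟩ (bddAbove_setOf_dist G)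

variable {G}

lemma ecc_eq_gdiam_of_dist_eq {u w : V} (h : G.dist u w = gdiam G) : ecc G u = gdiam G :=
  le_antisymm (csSup_le ⟨_, w, rfl⟩ (by rintro _ ⟨x, rfl⟩; exact dist_le_gdiam G u x))
    (h ▸ le_csSup (Set.finite_range (G.dist u)).bddAbove ⟨w, rfl⟩)

end Diameter

section Geodesic

variable {V : Type*} {G : SimpleGraph V} {u v : V}

lemma SimpleGraph.Walk.dist_getVert_le (p : G.Walk u v) (i : ℕ) : G.dist u (p.getVert i) ≤ i :=
  (SimpleGraph.dist_le (p.take i)).trans (by simp [SimpleGraph.Walk.take_length])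

lemma SimpleGraph.Walk.dist_getVert_of_length_eq_dist (p : G.Walk u v)
    (hp : p.length = G.dist u v) {i : ℕ} (hi : i ≤ p.length) :
    G.dist u (p.getVert i) = i ∧ G.dist (p.getVert i) v = p.length - i := by
  have hfst := p.dist_getVert_le i
  have hsnd : G.dist v (p.getVert i) ≤ p.length - i := by
    simpa [p.getVert_reverse, Nat.sub_sub_self hi] using p.reverse.dist_getVert_le (p.length - i)
  have htri := (p.take i).reachable.dist_triangle_left v
  rw [G.dist_comm (u := v)] at hsnd
  constructor <;> omega

lemma SimpleGraph.Reachable.exists_adj_dist_eq_sub_one {x : V} (hr : G.Reachable u x)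
    (hne : u ≠ x) : ∃ a, G.Adj u a ∧ G.dist a x = G.dist u x - 1 := by
  obtain ⟨p, hp⟩ := hr.exists_walk_length_eq_dist
  have hlen : 1 ≤ p.length := by
    rw [hp]; exact hr.pos_dist_of_ne hne
  refine ⟨p.getVert 1, by simpa using p.adj_getVert_succ hlen, ?_⟩
  rw [(p.dist_getVert_of_length_eq_dist hp hlen).2, hp]

lemma SimpleGraph.Walk.injOn_dist_support (p : G.Walk u v) (hp : p.length = G.dist u v) :
    Set.InjOn (G.dist u) {x | x ∈ p.support} := by
  rintro _ hx _ hy hxy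
  obtain ⟨i, rfl, hi⟩ := p.mem_support_iff_exists_getVert.1 hx
  obtain ⟨j, rfl, hj⟩ := p.mem_support_iff_exists_getVert.1 hy
  have hij : i = j := by
    rwa [(p.dist_getVert_of_length_eq_dist hp hi).1, (p.dist_getVert_of_length_eq_dist hp hj).1]
      at hxy
  rw [hij]

end Geodesic

namespace Twins

variable {V : Type*} {G : SimpleGraph V} {u v x : V}

lemma symm (h : Twins G u v) : Twins G v u :=
  ⟨h.1.symm, h.2.imp (fun h x => (h x).symm) (fun h x => (h x).symm)⟩

lemma dist_le_one_of_adj (h : Twins G u v) (ha : G.Adj u x) : G.dist v x ≤ 1 := by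
  have hvx : G.Adj v x ∨ v = x := by
    rcases h.2 with hopen | hclosed
    · exact Or.inl ((hopen x).1 ha)
    · exact (hclosed x).1 (Or.inl ha)
  rcases hvx with hvx | rfl
  · exact (SimpleGraph.dist_eq_one_iff_adj.2 hvx).le
  · simp

lemma dist_le_of_ne (hG : G.Connected) (h : Twins G u v) (hxu : x ≠ u) :
    G.dist v x ≤ G.dist u x := by
  obtain ⟨a, hua, hax⟩ := (hG.preconnected u x).exists_adj_dist_eq_sub_one hxu.symm
  have hux : 0 < G.dist u x := hG.pos_dist_of_ne hxu.symm
  have hva := h.dist_le_one_of_adj hua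
  have htri : G.dist v x ≤ G.dist v a + G.dist a x := hG.dist_triangle
  omega

lemma dist_eq (hG : G.Connected) (h : Twins G u v) (hxu : x ≠ u) (hxv : x ≠ v) :
    G.dist v x = G.dist u x :=
  le_antisymm (h.dist_le_of_ne hG hxu) (h.symm.dist_le_of_ne hG hxv)

lemma dist_le_two (hG : G.Connected) (h : Twins G u v) : G.dist u v ≤ 2 := by
  obtain ⟨a, hua, -⟩ := (hG.preconnected u v).exists_adj_dist_eq_sub_one h.1
  have hav : G.dist a v ≤ 1 := by
    rw [G.dist_comm]; exact h.dist_le_one_of_adj hua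
  have hua' : G.dist u a = 1 := SimpleGraph.dist_eq_one_iff_adj.2 hua
  have htri : G.dist u v ≤ G.dist u a + G.dist a v := hG.dist_triangle
  omega

lemma dist_eq_of_two_lt (hG : G.Connected) (h : Twins G u v) (hx : 2 < G.dist u x) :
    G.dist v x = G.dist u x := by
  refine h.dist_eq hG ?_ ?_ <;> rintro rfl
  · simp at hx
  · have := h.dist_le_two hG
    omega

lemma dist_eq_dist_of_twins (hG : G.Connected) {a b w : V} (hv : Twins G a v)
    (hw : Twins G b w) (hab : 2 < G.dist a b) : G.dist v w = G.dist a b := by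
  have hwa : G.dist w a = G.dist b a := hw.dist_eq_of_two_lt hG (G.dist_comm ▸ hab)
  have haw : 2 < G.dist a w := by rwa [G.dist_comm, hwa, G.dist_comm]
  rw [hv.dist_eq_of_two_lt hG haw, G.dist_comm, hwa, G.dist_comm]

lemma notMem_support (hG : G.Connected) {a b : V} (hv : Twins G a v) (p : G.Walk a b)
    (hp : p.length = G.dist a b) (hab : 2 < G.dist a b) : v ∉ p.support := by
  intro hmem
  obtain ⟨i, rfl, hi⟩ := p.mem_support_iff_exists_getVert.1 hmem
  have hgb := (p.dist_getVert_of_length_eq_dist hp hi).2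
  rw [hv.dist_eq_of_two_lt hG hab] at hgb
  obtain rfl : i = 0 := by omega
  exact hv.1 p.getVert_zero.symm

lemma dist_lt_of_mem_support (hG : G.Connected) {a b : V} (hw : Twins G b w) (p : G.Walk a b)
    (hp : p.length = G.dist a b) (hab : 2 < G.dist a b) (hx : x ∈ p.support) (hxa : x ≠ a) :
    G.dist x w < G.dist a b := by
  obtain ⟨i, rfl, hi⟩ := p.mem_support_iff_exists_getVert.1 hx
  have hi0 : i ≠ 0 := by rintro rfl; exact hxa p.getVert_zero
  by_cases hxb : p.getVert i = b
  · rw [hxb]; have := hw.dist_le_two hG; omega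
  · have hwx := hw.dist_le_of_ne hG hxb
    have hgb := (p.dist_getVert_of_length_eq_dist hp hi).2
    rw [G.dist_comm, G.dist_comm (u := b)] at hwx
    omega

end Twins

section MetricDimension

variable {V : Type*} {G : SimpleGraph V}

lemma metricDim_le_ncard {S : Set V} (hS : Resolves G S) : metricDim G ≤ S.ncard :=
  Nat.sInf_le ⟨S, hS, rfl⟩

lemma resolves_compl (hG : G.Connected) {T : Set V}
    (hT : ∀ x ∈ T, ∀ y ∈ T, x ≠ y → ∃ s ∉ T, G.dist x s ≠ G.dist y s) : Resolves G Tᶜ := by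
  intro x y hxy
  by_cases hx : x ∈ T
  · by_cases hy : y ∈ T
    · exact hT x hx y hy hxy
    · refine ⟨y, hy, ?_⟩
      simpa using (hG.pos_dist_of_ne hxy).ne'
  · refine ⟨x, hx, ?_⟩
    simpa using (hG.pos_dist_of_ne hxy.symm).ne

lemma metricDim_add_ncard_le [Finite V] (hG : G.Connected) {T : Set V}
    (hT : ∀ x ∈ T, ∀ y ∈ T, x ≠ y → ∃ s ∉ T, G.dist x s ≠ G.dist y s) :
    metricDim G + T.ncard ≤ Nat.card V := by
  have := metricDim_le_ncard (resolves_compl hG hT)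
  have := Set.ncard_add_ncard_compl T
  omega

lemma metricDim_add_dist_lt_card [Finite V] (hG : G.Connected) {a b v w : V}
    (hab : 2 < G.dist a b) (hv : Twins G a v) (hw : Twins G b w) :
    metricDim G + G.dist a b < Nat.card V := by
  classical
  obtain ⟨p, hp⟩ := hG.exists_walk_length_eq_dist a b
  have hvp : v ∉ p.support := hv.notMem_support hG p hp hab
  have hwp : w ∉ p.support := by
    simpa using hw.notMem_support hG p.reverse (by simp [hp, G.dist_comm]) (G.dist_comm ▸ hab)
  have hvw : G.dist v w = G.dist a b := hv.dist_eq_dist_of_twins hG hw hab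
  have hwv : w ≠ v := by
    rintro rfl
    simp at hvw
    omega
  set T : Finset V := insert v (p.support.toFinset.erase a)
  have haT : a ∉ T := by simp [T, hv.1]
  have hwT : w ∉ T := by simp [T, hwv, hwp]
  have hsep : ∀ x ∈ (T : Set V), ∀ y ∈ (T : Set V), x ≠ y →
      ∃ s ∉ (T : Set V), G.dist x s ≠ G.dist y s := by
    intro x hx y hy hxy
    simp only [T, Finset.coe_insert, Set.mem_insert_iff, Finset.coe_erase, Set.mem_sdiff,
      List.coe_toFinset, Set.mem_ofPred_eq, Set.mem_singleton_iff] at hx hy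
    rcases hx with rfl | ⟨hx, hxa⟩ <;> rcases hy with rfl | ⟨hy, hya⟩
    · exact absurd rfl hxy
    · have := hw.dist_lt_of_mem_support hG p hp hab hy hya
      exact ⟨w, hwT, by omega⟩
    · have := hw.dist_lt_of_mem_support hG p hp hab hx hxa
      exact ⟨w, hwT, by omega⟩
    · refine ⟨a, haT, fun hxy' => hxy (p.injOn_dist_support hp hx hy ?_)⟩
      simpa only [G.dist_comm (v := a)] using hxy'
  have hcard : (T : Set V).ncard = G.dist a b + 1 := by
    rw [Set.ncard_coe_finset, Finset.card_insert_of_notMem (by simp [hvp]),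
      Finset.card_erase_of_mem (by simp),
      List.toFinset_card_of_nodup (p.isPath_of_length_eq_dist hp).support_nodup,
      p.length_support, hp, Nat.add_sub_cancel]
  have := metricDim_add_ncard_le hG hsep
  omega

end MetricDimension

theorem exists_eccentric_without_twin {V : Type*} [Fintype V] (G : SimpleGraph V)
    (hG : G.Connected) (D : ℕ) (hD : 3 ≤ D) (hdiam : gdiam G = D)
    (hdim : metricDim G = Fintype.card V - D) :
    ∃ u : V, ecc G u = D ∧ ∀ v : V, ¬ Twins G u v := by
  have := hG.nonempty
  obtain ⟨a, b, hab⟩ := exists_dist_eq_gdiam G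
  have hba : G.dist b a = gdiam G := G.dist_comm.trans hab
  by_contra! hyp
  obtain ⟨v, hv⟩ := hyp a (hdiam ▸ ecc_eq_gdiam_of_dist_eq hab)
  obtain ⟨w, hw⟩ := hyp b (hdiam ▸ ecc_eq_gdiam_of_dist_eq hba)
  have hlt := metricDim_add_dist_lt_card hG (by omega) hv hw
  rw [Nat.card_eq_fintype_card, hdim, hab, hdiam] at hlt
  omega
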